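/- Choice of intermittency parameters: let d ≥ 2 and let (p, r, s) ∈ [1,∞]³ with p > 1 satisfy either (1/p + 1/r > 1 and 1 < s < d) or (1/p + 1/r ≤ 1, 1 < p < 2, and 1/d + (1/2)·(1 − 1/r − 1/p)/(1/2 − 1/r) < 1/s < 1). Then there exist N ∈ ℕ and, for every sufficiently large λ, parameters r_⊥, r_∥, η with λ^{−1} ≪ r_⊥ ≪ r_∥ ≪ 1 and η^{−1} ≤ λ^d such that max{ r_⊥/r_∥, (r_⊥λ)^{−1}, λ r_⊥^{(d−1)/s−(d−1)/2} r_∥^{1/s−1/2} η^{1/2}, r_⊥^{(d−1)/2} r_∥^{1/2} η^{−1/2}, r_⊥^{(d−1)/p−(d−1)/2} r_∥^{1/p−1/2} η^{1/r−1/2} } ≤ λ^{−1/N}. -/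

import Mathlib

open Filter
open scoped BigOperators ENNReal Topology

noncomputable section

/-- The admissible set `𝒜` of integrability exponents `(p, r, s) ∈ [1,∞]³` (written via
the reciprocals `1/p = p⁻¹.toReal`, etc., with `1/∞ = 0`):
either `1/p + 1/r > 1` and `1 < s < d`, or `1/p + 1/r ≤ 1`, `1 < p < 2` and
`1/d + (1/2)(1 − 1/r − 1/p)/(1/2 − 1/r) < 1/s < 1`. -/
def memA (d : ℕ) (p r s : ℝ≥0∞) : Prop :=
  (1 < p⁻¹.toReal + r⁻¹.toReal ∧ 1 / (d : ℝ) < s⁻¹.toReal ∧ s⁻¹.toReal < 1) ∨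
  (p⁻¹.toReal + r⁻¹.toReal ≤ 1 ∧ 1/2 < p⁻¹.toReal ∧ p⁻¹.toReal < 1 ∧
    1 / (d : ℝ) + (1/2) * (1 - r⁻¹.toReal - p⁻¹.toReal) / (1/2 - r⁻¹.toReal)
      < s⁻¹.toReal ∧ s⁻¹.toReal < 1)

lemma exA' (d : ℕ) (hd : 2 ≤ d) (M : ℝ) (hM0 : 0 < M) (hMd : M < d) :
    ∃ a b : ℝ, 0 < b ∧ b < a ∧ a < 1 ∧ a * ((d:ℝ) - 1) + b = M := by
  have hd2 : (2:ℝ) ≤ (d:ℝ) := by exact_mod_cast hd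
  have hdpos : (0:ℝ) < (d:ℝ) := by linarith
  set m := min M ((d:ℝ) - M) with hm
  have hmpos : 0 < m := lt_min hM0 (by linarith)
  have hm1 : m ≤ M := min_le_left _ _
  have hm2 : m ≤ (d:ℝ) - M := min_le_right _ _
  set e := m / (d:ℝ) with he
  have hepos : 0 < e := div_pos hmpos hdpos
  have hed : e * (d:ℝ) = m := div_mul_cancel₀ m hdpos.ne'
  refine ⟨(M + e)/(d:ℝ), (M - ((d:ℝ)-1)*e)/(d:ℝ), ?_, ?_, ?_, ?_⟩
  · apply div_pos _ hdpos
    nlinarith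
  · rw [div_lt_div_iff₀ hdpos hdpos]
    nlinarith
  · rw [div_lt_one hdpos]
    nlinarith
  · field_simp
    ring

set_option maxHeartbeats 1000000 in
lemma exMc' (d : ℕ) (hd : 2 ≤ d) (pi rho al : ℝ) (hρ1 : rho ≤ 1)
    (hcase : (1 < pi + rho ∧ 1/(d:ℝ) < al) ∨
      (pi + rho ≤ 1 ∧ 1/2 < pi ∧ 1/(d:ℝ) + (1/2)*(1 - rho - pi)/(1/2 - rho) < al)) :
    ∃ M c : ℝ, 0 < M ∧ M < d ∧ c ≤ d ∧
      1 - M*(al - 1/2) - c/2 < 0 ∧ c < M ∧ 0 < M*(pi - 1/2) + c*(rho - 1/2) := by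
  have hd2 : (2:ℝ) ≤ (d:ℝ) := by exact_mod_cast hd
  have hdpos : (0:ℝ) < (d:ℝ) := by linarith
  rcases hcase with ⟨hpr, hal⟩ | ⟨hpr, hpi, hal⟩
  · -- case 1
    have hα0 : 0 < al := lt_trans (by positivity) hal
    have hαd : 1 < (d:ℝ) * al := by
      rw [div_lt_iff₀ hdpos] at hal; linarith [hal]
    obtain ⟨M, hM⟩ : ∃ x : ℝ, x = (1/al + (d:ℝ))/2 := ⟨_, rfl⟩
    have hM0 : 0 < M := by rw [hM]; positivity
    have hMα : 1 < M * al := by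
      have h1 : (1/al) * al = 1 := by field_simp
      have h2 : M * al = (1 + (d:ℝ)*al)/2 := by rw [hM]; field_simp
      rw [h2]; linarith
    have hMd : M < (d:ℝ) := by
      rw [hM, div_lt_iff₀ (by norm_num : (0:ℝ) < 2)]
      have : 1/al < (d:ℝ) := by rw [div_lt_iff₀ hα0]; linarith
      linarith
    obtain ⟨δ, hδ⟩ : ∃ x : ℝ, x = min (2*M*al - 2) (M*(pi + rho - 1)) / 2 := ⟨_, rfl⟩
    have hMpr : 0 < M*(pi + rho - 1) := mul_pos hM0 (by linarith)
    have hδpos : 0 < δ := by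
      rw [hδ]
      exact div_pos (lt_min (by nlinarith) hMpr) (by norm_num)
    have hδ1 : δ ≤ (2*M*al - 2)/2 := by
      rw [hδ]; exact div_le_div_of_nonneg_right (min_le_left _ _) (by norm_num)
    have hδ2 : δ ≤ M*(pi + rho - 1)/2 := by
      rw [hδ]; exact div_le_div_of_nonneg_right (min_le_right _ _) (by norm_num)
    have hδρ : δ * rho ≤ δ := by nlinarith
    refine ⟨M, M - δ, hM0, hMd, by linarith, by linarith, by linarith, by nlinarith⟩
  · -- case 2
    have hρ' : 0 < 1/2 - rho := by linarith
    obtain ⟨K, hK⟩ : ∃ x : ℝ, x = 2*al - (1 - pi - rho)/(1/2 - rho) := ⟨_, rfl⟩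
    have hKd : 2/(d:ℝ) < K := by
      have h2 : (1/2)*(1 - rho - pi)/(1/2 - rho) = ((1 - pi - rho)/(1/2 - rho))/2 := by
        ring
      have h3 : 1/(d:ℝ) = (2/(d:ℝ))/2 := by ring
      rw [h3, h2] at hal
      rw [hK]; linarith
    have hK0 : 0 < K := lt_trans (by positivity) hKd
    obtain ⟨M, hM⟩ : ∃ x : ℝ, x = (2/K + (d:ℝ))/2 := ⟨_, rfl⟩
    have hM0 : 0 < M := by rw [hM]; positivity
    have hdK : 2 < (d:ℝ)*K := by rw [div_lt_iff₀ hdpos] at hKd; linarith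
    have hMK : 2 < M * K := by
      have h2 : M * K = (2 + (d:ℝ)*K)/2 := by rw [hM]; field_simp
      rw [h2]; linarith
    have hMd : M < (d:ℝ) := by
      rw [hM, div_lt_iff₀ (by norm_num : (0:ℝ) < 2)]
      have : 2/K < (d:ℝ) := by rw [div_lt_iff₀ hK0]; linarith
      linarith
    have hK2α : K ≤ 2*al := by
      have : 0 ≤ (1 - pi - rho)/(1/2 - rho) := div_nonneg (by linarith) hρ'.le
      rw [hK]; linarith
    have hMα : 1 < M * al := by
      nlinarith [mul_nonneg hM0.le (sub_nonneg.mpr hK2α)]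
    obtain ⟨U, hU⟩ : ∃ x : ℝ, x = M*(pi - 1/2)/(1/2 - rho) := ⟨_, rfl⟩
    obtain ⟨L, hL⟩ : ∃ x : ℝ, x = 2 + M*(1 - 2*al) := ⟨_, rfl⟩
    have e1 : U*(1/2 - rho) = M*(pi - 1/2) := by
      rw [hU]; exact div_mul_cancel₀ _ hρ'.ne'
    have e2 : K*(1/2 - rho) = 2*al*(1/2 - rho) - (1 - pi - rho) := by
      rw [hK, sub_mul, div_mul_cancel₀ _ hρ'.ne']
    have e3 : (U - L)*(1/2 - rho) = (M*K - 2)*(1/2 - rho) := by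
      rw [hL]; linear_combination e1 - M*e2
    have hUL : U - L = M*K - 2 := mul_right_cancel₀ hρ'.ne' e3
    have hLU : L < U := by linarith
    have hUM : U ≤ M := by
      rw [hU, div_le_iff₀ hρ']
      exact mul_le_mul_of_nonneg_left (show pi - 1/2 ≤ 1/2 - rho by linarith) hM0.le
    have hLM : L < M := by rw [hL]; linarith [hMα]
    obtain ⟨c, hc⟩ : ∃ x : ℝ, x = (L + U)/2 := ⟨_, rfl⟩
    have hcU : c < U := by rw [hc]; linarith
    have hcM : c < M := by rw [hc]; linarith
    refine ⟨M, c, hM0, hMd, by linarith, ?_, hcM, ?_⟩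
    · linarith [hLU, hL, hc]
    · have h9 : c*(1/2 - rho) < U*(1/2 - rho) := by
        exact mul_lt_mul_of_pos_right hcU hρ'
      linarith [h9, e1]

set_option maxHeartbeats 1000000 in
/-- **Choice of intermittency parameters.**  Let `d ≥ 2` and `(p,r,s) ∈ 𝒜` with `p > 1`.
Then there exist `N ∈ ℕ` and, for every sufficiently large `λ`, parameters
`r_⊥, r_∥, η` with `λ⁻¹ ≪ r_⊥ ≪ r_∥ ≪ 1` and `η⁻¹ ≤ λ^d` such that
`max{ r_⊥/r_∥, (r_⊥λ)⁻¹, λ r_⊥^{(d−1)/s−(d−1)/2} r_∥^{1/s−1/2} η^{1/2},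
r_⊥^{(d−1)/2} r_∥^{1/2} η^{−1/2}, r_⊥^{(d−1)/p−(d−1)/2} r_∥^{1/p−1/2} η^{1/r−1/2} } ≤ λ^{−1/N}`. -/
theorem intermittency_parameter_choice
    (d : ℕ) (hd : 2 ≤ d) (p r s : ℝ≥0∞)
    (hp1 : 1 ≤ p) (hr1 : 1 ≤ r) (hs1 : 1 ≤ s)
    (hp : 1 < p) (hA : memA d p r s) :
    ∃ N : ℕ, 0 < N ∧ ∃ rp rl eta : ℝ → ℝ,
      Tendsto (fun lam => rp lam * lam) atTop atTop ∧
      Tendsto (fun lam => rp lam / rl lam) atTop (𝓝 0) ∧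
      Tendsto rl atTop (𝓝 0) ∧
      ∀ᶠ lam in atTop,
        0 < rp lam ∧ rp lam < rl lam ∧ rl lam < 1 ∧ 0 < eta lam ∧
        (eta lam)⁻¹ ≤ lam ^ (d : ℝ) ∧
        rp lam / rl lam ≤ lam ^ (-(1 : ℝ) / N) ∧
        (rp lam * lam)⁻¹ ≤ lam ^ (-(1 : ℝ) / N) ∧
        lam * rp lam ^ (((d : ℝ) - 1) * s⁻¹.toReal - ((d : ℝ) - 1) / 2)
            * rl lam ^ (s⁻¹.toReal - 1/2) * eta lam ^ ((1 : ℝ)/2)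
          ≤ lam ^ (-(1 : ℝ) / N) ∧
        rp lam ^ (((d : ℝ) - 1) / 2) * rl lam ^ ((1 : ℝ)/2) * eta lam ^ (-(1 : ℝ)/2)
          ≤ lam ^ (-(1 : ℝ) / N) ∧
        rp lam ^ (((d : ℝ) - 1) * p⁻¹.toReal - ((d : ℝ) - 1) / 2)
            * rl lam ^ (p⁻¹.toReal - 1/2) * eta lam ^ (r⁻¹.toReal - 1/2)
          ≤ lam ^ (-(1 : ℝ) / N) := by
  have hρ1 : r⁻¹.toReal ≤ 1 := by
    have h := ENNReal.toReal_mono (by simp) (ENNReal.inv_le_one.mpr hr1)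
    simpa using h
  have hcase : (1 < p⁻¹.toReal + r⁻¹.toReal ∧ 1/(d:ℝ) < s⁻¹.toReal) ∨
      (p⁻¹.toReal + r⁻¹.toReal ≤ 1 ∧ 1/2 < p⁻¹.toReal ∧
        1/(d:ℝ) + (1/2)*(1 - r⁻¹.toReal - p⁻¹.toReal)/(1/2 - r⁻¹.toReal) < s⁻¹.toReal) := by
    rcases hA with ⟨h1, h2, h3⟩ | ⟨h1, h2, h3, h4, h5⟩
    · exact Or.inl ⟨h1, h2⟩
    · exact Or.inr ⟨h1, h2, h4⟩
  obtain ⟨M, c, hM0, hMd, hcd, hi3, hcM, hi5⟩ :=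
    exMc' d hd p⁻¹.toReal r⁻¹.toReal s⁻¹.toReal hρ1 hcase
  obtain ⟨a, b, hb0, hba, ha1, hab⟩ := exA' d hd M hM0 hMd
  rw [← hab] at hi3 hcM hi5
  obtain ⟨ε, hεpos, hε1, hε2, hε3, hε4, hε5⟩ :
      ∃ ε : ℝ, 0 < ε ∧ ε ≤ a - b ∧ ε ≤ 1 - a ∧
        ε ≤ -(1 - (a*((d:ℝ)-1)+b)*(s⁻¹.toReal - 1/2) - c/2) ∧
        ε ≤ ((a*((d:ℝ)-1)+b) - c)/2 ∧
        ε ≤ (a*((d:ℝ)-1)+b)*(p⁻¹.toReal - 1/2) + c*(r⁻¹.toReal - 1/2) := by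
    refine ⟨min (min (a-b) (1-a)) (min (min
      (-(1 - (a*((d:ℝ)-1)+b)*(s⁻¹.toReal - 1/2) - c/2))
      (((a*((d:ℝ)-1)+b) - c)/2))
      ((a*((d:ℝ)-1)+b)*(p⁻¹.toReal - 1/2) + c*(r⁻¹.toReal - 1/2))), ?_, ?_, ?_, ?_, ?_, ?_⟩
    · refine lt_min (lt_min (by linarith) (by linarith))
        (lt_min (lt_min (by linarith) (by linarith)) (by linarith))
    · exact le_trans (min_le_left _ _) (min_le_left _ _)
    · exact le_trans (min_le_left _ _) (min_le_right _ _)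
    · exact le_trans (min_le_right _ _) (le_trans (min_le_left _ _) (min_le_left _ _))
    · exact le_trans (min_le_right _ _) (le_trans (min_le_left _ _) (min_le_right _ _))
    · exact le_trans (min_le_right _ _) (min_le_right _ _)
  obtain ⟨N, hNdef⟩ : ∃ n : ℕ, n = ⌈ε⁻¹⌉₊ := ⟨_, rfl⟩
  have hN0 : 0 < N := hNdef ▸ Nat.ceil_pos.mpr (by positivity)
  have hNR : (0:ℝ) < (N:ℝ) := by exact_mod_cast hN0
  have h1N : 1/(N:ℝ) ≤ ε := by
    rw [div_le_iff₀ hNR]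
    calc (1:ℝ) = ε * ε⁻¹ := (mul_inv_cancel₀ hεpos.ne').symm
    _ ≤ ε * (N:ℝ) := by
      refine mul_le_mul_of_nonneg_left ?_ hεpos.le
      rw [hNdef]
      exact_mod_cast Nat.le_ceil ε⁻¹
  refine ⟨N, hN0, fun lam => lam ^ (-a), fun lam => lam ^ (-b), fun lam => lam ^ (-c),
    ?_, ?_, ?_, ?_⟩
  · refine Tendsto.congr' ?_ (tendsto_rpow_atTop (show (0:ℝ) < 1 - a by linarith))
    filter_upwards [eventually_gt_atTop 0] with lam hl
    rw [show (1:ℝ) - a = -a + 1 by ring, Real.rpow_add hl, Real.rpow_one]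
  · refine Tendsto.congr' ?_ (tendsto_rpow_neg_atTop (show (0:ℝ) < a - b by linarith))
    filter_upwards [eventually_gt_atTop 0] with lam hl
    rw [show -(a - b) = -a - -b by ring, Real.rpow_sub hl]
  · exact tendsto_rpow_neg_atTop hb0
  · filter_upwards [eventually_gt_atTop 1] with lam hl1
    have hl0 : (0:ℝ) < lam := by linarith
    have hle : (1:ℝ) ≤ lam := hl1.le
    have hmul : ∀ x y : ℝ, lam ^ x * lam ^ y = lam ^ (x + y) :=
      fun x y => (Real.rpow_add hl0 x y).symm
    have hpow : ∀ x y : ℝ, (lam ^ x) ^ y = lam ^ (x * y) :=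
      fun x y => (Real.rpow_mul hl0.le x y).symm
    have hsm : ∀ x : ℝ, lam * lam ^ x = lam ^ (1 + x) := by
      intro x
      rw [Real.rpow_add hl0, Real.rpow_one]
    have hmono : ∀ E F : ℝ, E ≤ F → lam ^ E ≤ lam ^ F :=
      fun _ _ h => Real.rpow_le_rpow_of_exponent_le hle h
    refine ⟨Real.rpow_pos_of_pos hl0 _, ?_, ?_, Real.rpow_pos_of_pos hl0 _, ?_, ?_, ?_,
      ?_, ?_, ?_⟩
    · exact (Real.rpow_lt_rpow_left_iff hl1).mpr (by linarith)
    · exact Real.rpow_lt_one_of_one_lt_of_neg hl1 (by linarith)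
    · have h : (lam ^ (-c))⁻¹ = lam ^ c := by rw [Real.rpow_neg hl0.le, inv_inv]
      rw [h]
      exact hmono _ _ hcd
    · rw [← Real.rpow_sub hl0]
      exact hmono _ _ (by rw [show -(1:ℝ)/(N:ℝ) = -(1/(N:ℝ)) from neg_div _ _]; linarith)
    · have h : (lam ^ (-a) * lam) = lam ^ (-a + 1) := by
        rw [Real.rpow_add hl0, Real.rpow_one]
      rw [h, ← Real.rpow_neg hl0.le]
      exact hmono _ _ (by rw [show -(1:ℝ)/(N:ℝ) = -(1/(N:ℝ)) from neg_div _ _]; linarith)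
    · rw [hpow, hpow, hpow, mul_assoc, mul_assoc, hmul, hmul, hsm]
      exact hmono _ _ (by rw [show -(1:ℝ)/(N:ℝ) = -(1/(N:ℝ)) from neg_div _ _]; nlinarith [hi3, hε3, h1N])
    · rw [hpow, hpow, hpow, hmul, hmul]
      exact hmono _ _ (by rw [show -(1:ℝ)/(N:ℝ) = -(1/(N:ℝ)) from neg_div _ _]; nlinarith [hε4, h1N])
    · rw [hpow, hpow, hpow, hmul, hmul]
      exact hmono _ _ (by rw [show -(1:ℝ)/(N:ℝ) = -(1/(N:ℝ)) from neg_div _ _]; nlinarith [hε5, h1N])
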